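/- Fix a finite Markov decision process and c ∈ (0,1), and let d̃ be the unique bounded nonnegative fixed point of the operator F(d)(s_i, s_j) = max_{a ∈ A} [ (1−c)·|R(s_i,a) − R(s_j,a)| + c·W₁(P(·|s_i,a), P(·|s_j,a); d) ]. Then for all states s_i, s_j ∈ S, d̃(s_i, s_j) = 0 if and only if s_i and s_j are related by some bisimulation relation on the MDP; that is, the zero-set equivalence relation of the bisimulation metric d̃ is exactly the largest (coarsest) bisimulation relation, and its equivalence classes form the coarsest bisimulation partition. -/
import Mathlib


open Finset
open scoped Classical

/-- `B` is a bisimulation relation on the finite MDP `(P, R)`: an equivalence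
relation such that related states have identical rewards and identical
transition probabilities into every equivalence class of `B`. -/
noncomputable def IsBisimulation {S A : Type} [Fintype S]
    (P : S → A → S → ℝ) (R : S → A → ℝ) (B : S → S → Prop) : Prop :=
  Equivalence B ∧
    ∀ si sj, B si sj →
      (∀ a, R si a = R sj a) ∧
      (∀ a (s₀ : S),
        ∑ s' ∈ univ.filter (fun t => B s₀ t), P si a s' =
          ∑ s' ∈ univ.filter (fun t => B s₀ t), P sj a s')

/-- `g` is a coupling of the probability mass functions `μ` and `ν` on a finite
set `S`. -/
def IsCoupling {S : Type} [Fintype S] (μ ν : S → ℝ) (g : S × S → ℝ) : Prop :=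
  (∀ p, 0 ≤ g p) ∧
  (∀ s, ∑ s', g (s, s') = μ s) ∧
  (∀ s', ∑ s, g (s, s') = ν s')

/-- The 1-Wasserstein distance between `μ` and `ν` with cost function `d`. -/
noncomputable def W1 {S : Type} [Fintype S] (μ ν : S → ℝ) (d : S × S → ℝ) : ℝ :=
  sInf {x | ∃ g : S × S → ℝ, IsCoupling μ ν g ∧ x = ∑ p, d p * g p}

/-- The operator whose unique fixed point is the bisimulation metric. -/
noncomputable def bisimF {S A : Type} [Fintype S] [Fintype A] [Nonempty A]
    (c : ℝ) (P : S → A → S → ℝ) (R : S → A → ℝ)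
    (d : S × S → ℝ) (p : S × S) : ℝ :=
  univ.sup' univ_nonempty fun a =>
    (1 - c) * |R p.1 a - R p.2 a| + c * W1 (P p.1 a) (P p.2 a) d

section Helpers

variable {S : Type} [Fintype S]

lemma prod_coupling (μ ν : S → ℝ)
    (hμ0 : ∀ s, 0 ≤ μ s) (hν0 : ∀ s, 0 ≤ ν s)
    (hμ1 : ∑ s, μ s = 1) (hν1 : ∑ s, ν s = 1) :
    IsCoupling μ ν (fun p => μ p.1 * ν p.2) := by
  refine ⟨fun p => mul_nonneg (hμ0 _) (hν0 _), fun s => ?_, fun s' => ?_⟩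
  · simp only
    rw [← Finset.mul_sum, hν1, mul_one]
  · simp only
    rw [← Finset.sum_mul, hμ1, one_mul]

lemma W1_le {μ ν : S → ℝ} {d : S × S → ℝ} (hd : ∀ p, 0 ≤ d p)
    {g : S × S → ℝ} (hg : IsCoupling μ ν g) :
    W1 μ ν d ≤ ∑ p, d p * g p := by
  apply csInf_le
  · refine ⟨0, ?_⟩
    rintro x ⟨g', hg', rfl⟩
    exact Finset.sum_nonneg fun p _ => mul_nonneg (hd p) (hg'.1 p)
  · exact ⟨g, hg, rfl⟩

lemma W1_nonneg (μ ν : S → ℝ) {d : S × S → ℝ} (hd : ∀ p, 0 ≤ d p) :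
    0 ≤ W1 μ ν d := by
  apply Real.sInf_nonneg
  rintro x ⟨g, hg, rfl⟩
  exact Finset.sum_nonneg fun p _ => mul_nonneg (hd p) (hg.1 p)

lemma coupling_total {μ ν : S → ℝ} {g : S × S → ℝ} (hg : IsCoupling μ ν g)
    (hμ1 : ∑ s, μ s = 1) : ∑ p, g p = 1 := by
  rw [← hμ1, Fintype.sum_prod_type]
  exact Finset.sum_congr rfl fun s _ => hg.2.1 s

/-- If `W1 μ ν dt = 0` then `μ` and `ν` give equal mass to any set closed
under the zero relation of `dt`. -/
lemma class_mass_eq {μ ν : S → ℝ}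
    (hμ0 : ∀ s, 0 ≤ μ s) (hν0 : ∀ s, 0 ≤ ν s)
    (hμ1 : ∑ s, μ s = 1) (hν1 : ∑ s, ν s = 1)
    {dt : S × S → ℝ} (hdt0 : ∀ p, 0 ≤ dt p)
    (hW : W1 μ ν dt = 0)
    (G : Finset S)
    (hG1 : ∀ x ∈ G, ∀ y, dt (x, y) = 0 → y ∈ G)
    (hG2 : ∀ y ∈ G, ∀ x, dt (x, y) = 0 → x ∈ G) :
    ∑ x ∈ G, μ x = ∑ y ∈ G, ν y := by
  by_cases hF : (univ.filter fun p : S × S => 0 < dt p).Nonempty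
  · set δ := (univ.filter fun p : S × S => 0 < dt p).inf' hF dt with hδdef
    have hδ : 0 < δ := by
      rw [hδdef, Finset.lt_inf'_iff]
      intro p hp; exact (Finset.mem_filter.mp hp).2
    have hδle : ∀ p : S × S, dt p ≠ 0 → δ ≤ dt p := by
      intro p hp
      apply Finset.inf'_le
      simp only [Finset.mem_filter, Finset.mem_univ, true_and]
      exact lt_of_le_of_ne (hdt0 p) (Ne.symm hp)
    have key : ∀ ε : ℝ, 0 < ε → |∑ x ∈ G, μ x - ∑ y ∈ G, ν y| ≤ ε := by
      intro ε hε
      have hne : {x | ∃ g : S × S → ℝ, IsCoupling μ ν g ∧ x = ∑ p, dt p * g p}.Nonempty :=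
        ⟨_, _, prod_coupling μ ν hμ0 hν0 hμ1 hν1, rfl⟩
      have hlt : sInf {x | ∃ g : S × S → ℝ, IsCoupling μ ν g ∧ x = ∑ p, dt p * g p} < δ * ε := by
        have : W1 μ ν dt < δ * ε := by rw [hW]; positivity
        exact this
      obtain ⟨x, hx, hxlt⟩ := exists_lt_of_csInf_lt hne hlt
      obtain ⟨g, hg, rfl⟩ := hx
      -- cross bounds
      have hcost0 : ∀ p ∈ (univ : Finset (S × S)), (0:ℝ) ≤ dt p * g p :=
        fun p _ => mul_nonneg (hdt0 p) (hg.1 p)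
      have hA : δ * (∑ x ∈ G, ∑ y ∈ Gᶜ, g (x, y)) ≤ ∑ p, dt p * g p := by
        have h1 : δ * (∑ x ∈ G, ∑ y ∈ Gᶜ, g (x, y)) = ∑ p ∈ G ×ˢ Gᶜ, δ * g p := by
          rw [Finset.sum_product]
          rw [Finset.mul_sum]
          exact Finset.sum_congr rfl fun x _ => Finset.mul_sum _ _ _
        rw [h1]
        calc ∑ p ∈ G ×ˢ Gᶜ, δ * g p ≤ ∑ p ∈ G ×ˢ Gᶜ, dt p * g p := by
              apply Finset.sum_le_sum
              intro p hp
              obtain ⟨hp1, hp2⟩ := Finset.mem_product.mp hp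
              refine mul_le_mul_of_nonneg_right (hδle p ?_) (hg.1 p)
              intro h0
              exact (Finset.mem_compl.mp hp2) (hG1 p.1 hp1 p.2 (by simpa using h0))
          _ ≤ ∑ p, dt p * g p :=
              Finset.sum_le_sum_of_subset_of_nonneg (Finset.subset_univ _)
                (fun p hp _ => mul_nonneg (hdt0 p) (hg.1 p))
      have hB : δ * (∑ y ∈ G, ∑ x ∈ Gᶜ, g (x, y)) ≤ ∑ p, dt p * g p := by
        have h1 : δ * (∑ y ∈ G, ∑ x ∈ Gᶜ, g (x, y)) = ∑ p ∈ G ×ˢ Gᶜ, δ * g (p.2, p.1) := by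
          rw [Finset.sum_product]
          rw [Finset.mul_sum]
          exact Finset.sum_congr rfl fun x _ => Finset.mul_sum _ _ _
        rw [h1]
        calc ∑ p ∈ G ×ˢ Gᶜ, δ * g (p.2, p.1) ≤ ∑ p ∈ G ×ˢ Gᶜ, dt (p.2, p.1) * g (p.2, p.1) := by
              apply Finset.sum_le_sum
              intro p hp
              obtain ⟨hp1, hp2⟩ := Finset.mem_product.mp hp
              refine mul_le_mul_of_nonneg_right (hδle _ ?_) (hg.1 _)
              intro h0
              exact (Finset.mem_compl.mp hp2) (hG2 p.1 hp1 p.2 h0)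
          _ = ∑ p ∈ Gᶜ ×ˢ G, dt p * g p := by
              rw [Finset.sum_product, Finset.sum_product]
              exact Finset.sum_comm
          _ ≤ ∑ p, dt p * g p :=
              Finset.sum_le_sum_of_subset_of_nonneg (Finset.subset_univ _)
                (fun p hp _ => mul_nonneg (hdt0 p) (hg.1 p))
      have hAn : 0 ≤ ∑ x ∈ G, ∑ y ∈ Gᶜ, g (x, y) :=
        Finset.sum_nonneg fun x _ => Finset.sum_nonneg fun y _ => hg.1 _
      have hBn : 0 ≤ ∑ y ∈ G, ∑ x ∈ Gᶜ, g (x, y) :=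
        Finset.sum_nonneg fun x _ => Finset.sum_nonneg fun y _ => hg.1 _
      have hAε : ∑ x ∈ G, ∑ y ∈ Gᶜ, g (x, y) ≤ ε :=
        le_of_lt ((mul_lt_mul_iff_right₀ hδ).mp (lt_of_le_of_lt hA hxlt))
      have hBε : ∑ y ∈ G, ∑ x ∈ Gᶜ, g (x, y) ≤ ε :=
        le_of_lt ((mul_lt_mul_iff_right₀ hδ).mp (lt_of_le_of_lt hB hxlt))
      have hμG : ∑ x ∈ G, μ x =
          (∑ x ∈ G, ∑ y ∈ G, g (x, y)) + ∑ x ∈ G, ∑ y ∈ Gᶜ, g (x, y) := by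
        rw [← Finset.sum_add_distrib]
        refine Finset.sum_congr rfl fun x hx => ?_
        rw [← hg.2.1 x]
        exact (Finset.sum_add_sum_compl G _).symm
      have hνG : ∑ y ∈ G, ν y =
          (∑ y ∈ G, ∑ x ∈ G, g (x, y)) + ∑ y ∈ G, ∑ x ∈ Gᶜ, g (x, y) := by
        rw [← Finset.sum_add_distrib]
        refine Finset.sum_congr rfl fun y hy => ?_
        rw [← hg.2.2 y]
        exact (Finset.sum_add_sum_compl G _).symm
      have hcomm : ∑ x ∈ G, ∑ y ∈ G, g (x, y) = ∑ y ∈ G, ∑ x ∈ G, g (x, y) :=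
        Finset.sum_comm
      rw [abs_le]
      exact ⟨by linarith, by linarith⟩
    have h0 : |∑ x ∈ G, μ x - ∑ y ∈ G, ν y| ≤ 0 := by
      by_contra h
      push_neg at h
      have := key _ (half_pos h)
      linarith
    have := le_antisymm h0 (abs_nonneg _)
    exact sub_eq_zero.mp (abs_eq_zero.mp this)
  · have hdt : ∀ p : S × S, dt p = 0 := by
      intro p
      by_contra h
      exact hF ⟨p, Finset.mem_filter.mpr
        ⟨Finset.mem_univ _, lt_of_le_of_ne (hdt0 p) (Ne.symm h)⟩⟩
    rcases G.eq_empty_or_nonempty with h | ⟨x, hx⟩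
    · simp [h]
    · have hGu : G = univ := Finset.eq_univ_of_forall fun y => hG1 x hx y (hdt _)
      rw [hGu, hμ1, hν1]

/-- From a bisimulation with matching class masses, build a coupling supported
on the relation. -/
lemma bisim_coupling (B : S → S → Prop) (hB : Equivalence B)
    (μ ν : S → ℝ) (hμ0 : ∀ s, 0 ≤ μ s) (hν0 : ∀ s, 0 ≤ ν s)
    (hsum : ∀ s₀ : S, ∑ s' ∈ univ.filter (fun t => B s₀ t), μ s' =
        ∑ s' ∈ univ.filter (fun t => B s₀ t), ν s') :
    ∃ g : S × S → ℝ, IsCoupling μ ν g ∧ ∀ p : S × S, ¬ B p.1 p.2 → g p = 0 := by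
  classical
  set m : S → ℝ := fun x => ∑ y ∈ univ.filter (fun t => B x t), ν y with hm
  have hm0 : ∀ x, 0 ≤ m x := fun x => Finset.sum_nonneg fun y _ => hν0 y
  have hfilter : ∀ x y, B x y →
      univ.filter (fun t => B x t) = univ.filter (fun t => B y t) := by
    intro x y hxy
    ext t
    simp only [Finset.mem_filter, Finset.mem_univ, true_and]
    exact ⟨fun h => hB.trans (hB.symm hxy) h, fun h => hB.trans hxy h⟩
  have hμle : ∀ x, μ x ≤ m x := by
    intro x
    have : m x = ∑ s' ∈ univ.filter (fun t => B x t), μ s' := (hsum x).symm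
    rw [this]
    exact Finset.single_le_sum (fun y _ => hμ0 y)
      (Finset.mem_filter.mpr ⟨Finset.mem_univ _, hB.refl x⟩)
  have hνle : ∀ y, ν y ≤ m y := fun y =>
    Finset.single_le_sum (fun t _ => hν0 t)
      (Finset.mem_filter.mpr ⟨Finset.mem_univ _, hB.refl y⟩)
  refine ⟨fun p => if B p.1 p.2 then (μ p.1 / m p.1) * ν p.2 else 0,
    ⟨?_, ?_, ?_⟩, fun p hp => if_neg hp⟩
  · intro p
    dsimp only
    split
    · exact mul_nonneg (div_nonneg (hμ0 _) (hm0 _)) (hν0 _)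
    · exact le_refl 0
  · intro x
    dsimp only
    rw [← Finset.sum_filter, ← Finset.mul_sum]
    have hmx : ∑ y ∈ univ.filter (fun t => B x t), ν y = m x := rfl
    rw [hmx]
    by_cases hx : m x = 0
    · have hμx : μ x = 0 := le_antisymm (hx ▸ hμle x) (hμ0 x)
      simp [hμx, hx]
    · exact div_mul_cancel₀ (μ x) hx
  · intro y
    dsimp only
    have h1 : ∀ x, (if B x y then (μ x / m x) * ν y else 0) =
        (if B y x then μ x * (ν y / m y) else 0) := by
      intro x
      by_cases h : B x y
      · rw [if_pos h, if_pos (hB.symm h)]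
        have hmm : m x = m y := by
          simp only [hm]
          rw [hfilter x y h]
        rw [hmm]
        ring
      · rw [if_neg h, if_neg (fun h' => h (hB.symm h'))]
    rw [Finset.sum_congr rfl (fun x _ => h1 x), ← Finset.sum_filter, ← Finset.sum_mul]
    have hmy : ∑ x ∈ univ.filter (fun t => B y t), μ x = m y := hsum y
    rw [hmy]
    by_cases hy : m y = 0
    · have hνy : ν y = 0 := le_antisymm (hy ▸ hνle y) (hν0 y)
      simp [hνy, hy]
    · rw [mul_div_assoc'] -- m y * ν y / m y
      rw [mul_comm (m y) (ν y), mul_div_assoc]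
      rw [div_self hy, mul_one]

lemma fix_components {A : Type} [Fintype A] [Nonempty A]
    {c : ℝ} (hc0 : 0 < c) (hc1 : c < 1)
    {P : S → A → S → ℝ} {R : S → A → ℝ} {dt : S × S → ℝ}
    (hdt0 : ∀ p, 0 ≤ dt p)
    (hfix : bisimF c P R dt = dt)
    {s t : S} (h0 : dt (s, t) = 0) (a : A) :
    R s a = R t a ∧ W1 (P s a) (P t a) dt = 0 := by
  have h := congrFun hfix (s, t)
  simp only [bisimF] at h
  rw [h0] at h
  have hle : (1 - c) * |R s a - R t a| + c * W1 (P s a) (P t a) dt ≤ 0 := by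
    rw [← h]
    exact Finset.le_sup'
      (fun a => (1 - c) * |R s a - R t a| + c * W1 (P s a) (P t a) dt)
      (Finset.mem_univ a)
  have hW := W1_nonneg (P s a) (P t a) hdt0
  have habs : 0 ≤ |R s a - R t a| := abs_nonneg _
  have hA : 0 ≤ (1 - c) * |R s a - R t a| :=
    mul_nonneg (by linarith) habs
  have hBn : 0 ≤ c * W1 (P s a) (P t a) dt := mul_nonneg hc0.le hW
  have h1 : (1 - c) * |R s a - R t a| = 0 := le_antisymm (by linarith) hA
  have h2 : c * W1 (P s a) (P t a) dt = 0 := le_antisymm (by linarith) hBn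
  constructor
  · rcases mul_eq_zero.mp h1 with h | h
    · linarith
    · have := abs_eq_zero.mp h
      linarith
  · rcases mul_eq_zero.mp h2 with h | h
    · linarith
    · exact h

end Helpers

/-- The zero-set of the bisimulation metric `d̃` is exactly the largest
(coarsest) bisimulation relation: `d̃(sᵢ, sⱼ) = 0` iff `sᵢ` and `sⱼ` are related
by some bisimulation relation on the MDP. -/
theorem bisim_metric_zero_iff_bisimilar
    {S A : Type} [Fintype S] [Nonempty S] [Fintype A] [Nonempty A]
    (c : ℝ) (hc0 : 0 < c) (hc1 : c < 1)
    (P : S → A → S → ℝ)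
    (hP0 : ∀ s a s', 0 ≤ P s a s')
    (hP1 : ∀ s a, ∑ s', P s a s' = 1)
    (R : S → A → ℝ)
    (dt : S × S → ℝ)
    (hdt0 : ∀ p, 0 ≤ dt p)
    (hfix : bisimF c P R dt = dt) :
    ∀ si sj : S,
      dt (si, sj) = 0 ↔ ∃ B : S → S → Prop, IsBisimulation P R B ∧ B si sj := by
  intro si sj
  constructor
  · -- forward: take the equivalence generated by the zero relation of dt
    intro h0
    refine ⟨Relation.EqvGen (fun s t => dt (s, t) = 0),
      ⟨Relation.EqvGen.is_equivalence _, ?_⟩, Relation.EqvGen.rel _ _ h0⟩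
    intro si' sj' hBij
    induction hBij with
    | rel s t h =>
        refine ⟨fun a => (fix_components hc0 hc1 hdt0 hfix h a).1, fun a s₀ => ?_⟩
        apply class_mass_eq (hP0 s a) (hP0 t a) (hP1 s a) (hP1 t a) hdt0
          (fix_components hc0 hc1 hdt0 hfix h a).2
        · intro x hx y hy0
          rw [Finset.mem_filter] at hx ⊢
          exact ⟨Finset.mem_univ _,
            Relation.EqvGen.trans _ _ _ hx.2 (Relation.EqvGen.rel _ _ hy0)⟩
        · intro y hy x hxy0
          rw [Finset.mem_filter] at hy ⊢
          exact ⟨Finset.mem_univ _,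
            Relation.EqvGen.trans _ _ _ hy.2
              (Relation.EqvGen.symm _ _ (Relation.EqvGen.rel _ _ hxy0))⟩
    | refl s => exact ⟨fun a => rfl, fun a s₀ => rfl⟩
    | symm s t h ih => exact ⟨fun a => (ih.1 a).symm, fun a s₀ => (ih.2 a s₀).symm⟩
    | trans s t u h1 h2 ih1 ih2 =>
        exact ⟨fun a => (ih1.1 a).trans (ih2.1 a),
          fun a s₀ => (ih1.2 a s₀).trans (ih2.2 a s₀)⟩
  · -- backward
    rintro ⟨B, ⟨hEq, hCond⟩, hBsisj⟩
    set T : Finset (S × S) := univ.filter (fun p => B p.1 p.2) with hT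
    have hmemT : (si, sj) ∈ T := Finset.mem_filter.mpr ⟨Finset.mem_univ _, hBsisj⟩
    have hTne : T.Nonempty := ⟨(si, sj), hmemT⟩
    set M := T.sup' hTne dt with hM
    have hMle : ∀ p ∈ T, dt p ≤ c * M := by
      intro p hp
      have hBp : B p.1 p.2 := (Finset.mem_filter.mp hp).2
      have h := congrFun hfix p
      simp only [bisimF] at h
      rw [← h]
      apply Finset.sup'_le
      intro a _
      have hR : R p.1 a = R p.2 a := (hCond _ _ hBp).1 a
      rw [hR, sub_self, abs_zero, mul_zero, zero_add]
      have hWM : W1 (P p.1 a) (P p.2 a) dt ≤ M := by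
        obtain ⟨g, hg, hsupp⟩ := bisim_coupling B hEq (P p.1 a) (P p.2 a)
          (hP0 _ _) (hP0 _ _) (fun s₀ => (hCond _ _ hBp).2 a s₀)
        calc W1 (P p.1 a) (P p.2 a) dt ≤ ∑ q, dt q * g q := W1_le hdt0 hg
          _ ≤ M := by
            have htot : ∑ q ∈ T, g q = 1 := by
              rw [← coupling_total hg (hP1 p.1 a)]
              apply Finset.sum_subset (Finset.subset_univ T)
              intro q _ hq
              apply hsupp
              intro hBq
              exact hq (Finset.mem_filter.mpr ⟨Finset.mem_univ _, hBq⟩)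
            calc ∑ q, dt q * g q = ∑ q ∈ T, dt q * g q := by
                  symm
                  apply Finset.sum_subset (Finset.subset_univ T)
                  intro q _ hq
                  rw [hsupp q (fun hBq =>
                    hq (Finset.mem_filter.mpr ⟨Finset.mem_univ _, hBq⟩)), mul_zero]
              _ ≤ ∑ q ∈ T, M * g q := Finset.sum_le_sum fun q hq =>
                  mul_le_mul_of_nonneg_right (Finset.le_sup' dt hq) (hg.1 q)
              _ = M := by rw [← Finset.mul_sum, htot, mul_one]
      exact mul_le_mul_of_nonneg_left hWM hc0.le
    obtain ⟨p₀, hp₀, hMp₀⟩ := Finset.exists_mem_eq_sup' hTne dt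
    have hMcM : M ≤ c * M := by
      calc M = dt p₀ := by rw [hM]; exact hMp₀
        _ ≤ c * M := hMle p₀ hp₀
    have hM0 : M ≤ 0 := by nlinarith
    have h1 : dt (si, sj) ≤ M := Finset.le_sup' dt hmemT
    exact le_antisymm (h1.trans hM0) (hdt0 _)
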